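/- Soundness and completeness of the MILP verification of local robustness for a one-hidden-layer ReLU classifier (Theorem 1 specialized to fully connected layers): let W₁ be a real h × n matrix with bias b₁ : Fin h → ℝ, W₂ a real c × h matrix (c ≥ 1) with bias b₂ : Fin c → ℝ, defining the network output f(x) i = (W₂.mulVec (fun j => max 0 ((W₁.mulVec x) j + b₁ j))) i + b₂ i; let the input domain be the linearly definable set P = {x : Fin n → ℝ | ∀ r, (A.mulVec x) r ≤ d r} for a real p × n matrix A and d : Fin p → ℝ; let l : Fin c be a label, k a natural number with c ≤ 2^k, and M ∈ ℝ such that for every x ∈ P: |(W₁.mulVec x) j + b₁ j| ≤ M for all j, and f(x) i − f(x) j ≤ M for all i, j. Then the following are equivalent: (a) for every x ∈ P and every j ≠ l, f(x) j < f(x) l; (b) there do NOT exist x : Fin n → ℝ, y : Fin h → ℝ, δ : Fin h → ℝ, δ' : Fin k → ℝ satisfying all of: (∀ r, (A.mulVec x) r ≤ d r); for every j, (δ j = 0 or δ j = 1), y j ≥ 0, y j ≥ (W₁.mulVec x) j + b₁ j, y j ≤ (W₁.mulVec x) j + b₁ j + M·(δ j), y j ≤ M·(1 − δ j); (∀ j,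 δ' j = 0 or δ' j = 1); for every z : Fin c with z ≠ l, (W₂.mulVec y) l + b₂ l ≤ (W₂.mulVec y) z + b₂ z + M · Σⱼ (bitⱼ(z) + (1 − 2·bitⱼ(z))·δ' j); Σⱼ (bitⱼ(l) + (1 − 2·bitⱼ(l))·δ' j) ≥ 1; and for every natural number z with c ≤ z < 2^k, Σⱼ (bitⱼ(z) + (1 − 2·bitⱼ(z))·δ' j) ≥ 1. -/

import Mathlib

/-!
A 0/1 vector `δ'` of length `k` is the binary expansion of some `w < 2 ^ k`, and the bit-mismatch
sum of `z` against it is the Hamming distance between the first `k` bits of `z` and of `w`: it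
vanishes for `z = w` and is at least `1` otherwise. So a feasible `δ'` selects a label `w < c`,
`w ≠ l`, for which the misclassification constraint reads `f x l ≤ f x w`, while for every other `z`
it is relaxed by at least `M ≥ f x l - f x z`. Given `|W₁ x + b₁| ≤ M`, the big-M constraints force
`y` to be exactly the ReLU layer.
-/

/-- The `j`-th binary digit of `z` (least significant bit first), as a real. -/
def bitR (z j : ℕ) : ℝ := if Nat.testBit z j then 1 else 0

def bitMismatch (k z : ℕ) (δ' : Fin k → ℝ) : ℝ :=
  ∑ j : Fin k, (bitR z j + (1 - 2 * bitR z j) * δ' j)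

def IsBigMReLU (M a y δ : ℝ) : Prop :=
  (δ = 0 ∨ δ = 1) ∧ y ≥ 0 ∧ y ≥ a ∧ y ≤ a + M * δ ∧ y ≤ M * (1 - δ)

lemma bitR_eq_zero_or_one (z j : ℕ) : bitR z j = 0 ∨ bitR z j = 1 := by
  unfold bitR; split <;> simp

lemma bitR_add_mul_bitR (z w j : ℕ) :
    bitR z j + (1 - 2 * bitR z j) * bitR w j = if z.testBit j = w.testBit j then 0 else 1 := by
  unfold bitR; cases z.testBit j <;> cases w.testBit j <;> norm_num

lemma bitMismatch_self (k w : ℕ) : bitMismatch k w (fun j => bitR w j) = 0 :=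
  Finset.sum_eq_zero fun j _ => by simp [bitR_add_mul_bitR]

lemma exists_testBit_ne_of_ne {k z w : ℕ} (hz : z < 2 ^ k) (hw : w < 2 ^ k) (hne : z ≠ w) :
    ∃ j : Fin k, z.testBit j ≠ w.testBit j := by
  by_contra! hbits
  refine hne (Nat.eq_of_testBit_eq fun i => ?_)
  by_cases hik : i < k
  · exact hbits ⟨i, hik⟩
  · have hk : 2 ^ k ≤ 2 ^ i := Nat.pow_le_pow_right two_pos (not_lt.mp hik)
    rw [Nat.testBit_lt_two_pow (hz.trans_le hk), Nat.testBit_lt_two_pow (hw.trans_le hk)]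

lemma one_le_bitMismatch {k z w : ℕ} (hz : z < 2 ^ k) (hw : w < 2 ^ k) (hne : z ≠ w) :
    1 ≤ bitMismatch k z (fun j => bitR w j) := by
  obtain ⟨j, hj⟩ := exists_testBit_ne_of_ne hz hw hne
  calc (1 : ℝ) = bitR z j + (1 - 2 * bitR z j) * bitR w j := by simp [bitR_add_mul_bitR, hj]
    _ ≤ bitMismatch k z (fun j => bitR w j) :=
      Finset.single_le_sum (f := fun j : Fin k => bitR z j + (1 - 2 * bitR z j) * bitR w j)
        (fun i _ => by rw [bitR_add_mul_bitR]; split <;> norm_num) (Finset.mem_univ j)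

lemma exists_lt_two_pow_bitR_eq {k : ℕ} {δ' : Fin k → ℝ} (hδ' : ∀ j, δ' j = 0 ∨ δ' j = 1) :
    ∃ w < 2 ^ k, (fun j : Fin k => bitR w j) = δ' := by
  refine ⟨Nat.ofBits fun j => δ' j = 1, Nat.ofBits_lt_two_pow _, funext fun j => ?_⟩
  rcases hδ' j with h | h <;> simp [bitR, h]

lemma IsBigMReLU.eq_max {M a y δ : ℝ} (H : IsBigMReLU M a y δ) : y = max 0 a := by
  obtain ⟨h01 | h01, hy0, hya, hya', hyM⟩ := H <;> subst h01
  · rw [max_eq_right (by linarith)]; linarith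
  · rw [max_eq_left (by linarith)]; linarith

lemma isBigMReLU_max {M a : ℝ} (ha : |a| ≤ M) :
    IsBigMReLU M a (max 0 a) (if a < 0 then 1 else 0) := by
  obtain ⟨haM, haM'⟩ := abs_le.mp ha
  by_cases hneg : a < 0
  · simp only [IsBigMReLU, if_pos hneg, max_eq_left hneg.le]
    refine ⟨by norm_num, ?_, ?_, ?_, ?_⟩ <;> linarith
  · simp only [IsBigMReLU, if_neg hneg, max_eq_right (not_lt.mp hneg)]
    refine ⟨by norm_num, ?_, ?_, ?_, ?_⟩ <;> linarith

theorem milp_local_robustness_general (n h c p k : ℕ) (hck : c ≤ 2 ^ k)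
    (W₁ : Matrix (Fin h) (Fin n) ℝ) (b₁ : Fin h → ℝ)
    (W₂ : Matrix (Fin c) (Fin h) ℝ) (b₂ : Fin c → ℝ)
    (A : Matrix (Fin p) (Fin n) ℝ) (d : Fin p → ℝ)
    (l : Fin c) (M : ℝ)
    (f : (Fin n → ℝ) → Fin c → ℝ)
    (hf : ∀ x i, f x i =
      W₂.mulVec (fun j => max 0 (W₁.mulVec x j + b₁ j)) i + b₂ i)
    (hM₁ : ∀ x : Fin n → ℝ, (∀ r, A.mulVec x r ≤ d r) →
      ∀ j, |W₁.mulVec x j + b₁ j| ≤ M)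
    (hM₂ : ∀ x : Fin n → ℝ, (∀ r, A.mulVec x r ≤ d r) →
      ∀ i j, f x i - f x j ≤ M) :
    (∀ x : Fin n → ℝ, (∀ r, A.mulVec x r ≤ d r) →
        ∀ j : Fin c, j ≠ l → f x j < f x l) ↔
      ¬ ∃ (x : Fin n → ℝ) (y : Fin h → ℝ) (δ : Fin h → ℝ) (δ' : Fin k → ℝ),
        (∀ r, A.mulVec x r ≤ d r) ∧
        (∀ j,
          (δ j = 0 ∨ δ j = 1) ∧
          y j ≥ 0 ∧
          y j ≥ W₁.mulVec x j + b₁ j ∧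
          y j ≤ W₁.mulVec x j + b₁ j + M * δ j ∧
          y j ≤ M * (1 - δ j)) ∧
        (∀ j, δ' j = 0 ∨ δ' j = 1) ∧
        (∀ z : Fin c, z ≠ l →
          W₂.mulVec y l + b₂ l ≤ W₂.mulVec y z + b₂ z +
            M * ∑ j : Fin k, (bitR (z : ℕ) j + (1 - 2 * bitR (z : ℕ) j) * δ' j)) ∧
        (1 ≤ ∑ j : Fin k, (bitR (l : ℕ) j + (1 - 2 * bitR (l : ℕ) j) * δ' j)) ∧
        (∀ z : ℕ, c ≤ z → z < 2 ^ k →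
          1 ≤ ∑ j : Fin k, (bitR z j + (1 - 2 * bitR z j) * δ' j)) := by
  constructor
  · rintro hrob ⟨x, y, δ, δ', hx, hrelu, hδ', hmis, hl, hrange⟩
    obtain ⟨w, hw, rfl⟩ := exists_lt_two_pow_bitR_eq hδ'
    have hw0 := bitMismatch_self k w
    have hwc : w < c := by
      by_contra! hcw
      have : 1 ≤ bitMismatch k w (bitR w ·) := hrange w hcw hw
      linarith
    have hwl : (⟨w, hwc⟩ : Fin c) ≠ l := by
      rintro rfl
      have : 1 ≤ bitMismatch k w (bitR w ·) := hl
      linarith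
    have hy : y = fun j => max 0 (W₁.mulVec x j + b₁ j) :=
      funext fun j => IsBigMReLU.eq_max (hrelu j)
    have hmisw : W₂.mulVec y l + b₂ l ≤
        W₂.mulVec y ⟨w, hwc⟩ + b₂ ⟨w, hwc⟩ + M * bitMismatch k w (bitR w ·) := hmis _ hwl
    rw [hw0, mul_zero, add_zero, hy, ← hf, ← hf] at hmisw
    exact hmisw.not_gt (hrob x hx _ hwl)
  · intro hnone x hx j hjl
    by_contra! hfjl
    have hlt_two_pow (z : Fin c) : (z : ℕ) < 2 ^ k := z.isLt.trans_le hck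
    refine hnone ⟨x, fun i => max 0 (W₁.mulVec x i + b₁ i),
      fun i => if W₁.mulVec x i + b₁ i < 0 then 1 else 0, fun i => bitR j i, hx,
      fun i => isBigMReLU_max (hM₁ x hx i), fun i => bitR_eq_zero_or_one j i, fun z _ => ?_,
      one_le_bitMismatch (hlt_two_pow l) (hlt_two_pow j) (Fin.val_ne_of_ne hjl.symm),
      fun z hcz hz => one_le_bitMismatch hz (hlt_two_pow j) (by omega)⟩
    change _ ≤ _ + M * bitMismatch k z (bitR j ·)
    rw [← hf, ← hf]
    rcases eq_or_ne z j with rfl | hzj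
    · rw [bitMismatch_self]; linarith
    · have hM : 0 ≤ M := by simpa using hM₂ x hx l l
      have := one_le_bitMismatch (hlt_two_pow z) (hlt_two_pow j) (Fin.val_ne_of_ne hzj)
      nlinarith [hM₂ x hx l z]

/-- Soundness and completeness of the MILP verification of local robustness
for a one-hidden-layer ReLU classifier. -/
theorem milp_local_robustness (n h c p k : ℕ) (hc : 1 ≤ c) (hck : c ≤ 2 ^ k)
    (W₁ : Matrix (Fin h) (Fin n) ℝ) (b₁ : Fin h → ℝ)
    (W₂ : Matrix (Fin c) (Fin h) ℝ) (b₂ : Fin c → ℝ)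
    (A : Matrix (Fin p) (Fin n) ℝ) (d : Fin p → ℝ)
    (l : Fin c) (M : ℝ)
    (f : (Fin n → ℝ) → Fin c → ℝ)
    (hf : ∀ x i, f x i =
      W₂.mulVec (fun j => max 0 (W₁.mulVec x j + b₁ j)) i + b₂ i)
    (hM₁ : ∀ x : Fin n → ℝ, (∀ r, A.mulVec x r ≤ d r) →
      ∀ j, |W₁.mulVec x j + b₁ j| ≤ M)
    (hM₂ : ∀ x : Fin n → ℝ, (∀ r, A.mulVec x r ≤ d r) →
      ∀ i j, f x i - f x j ≤ M) :
    (∀ x : Fin n → ℝ, (∀ r, A.mulVec x r ≤ d r) →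
        ∀ j : Fin c, j ≠ l → f x j < f x l) ↔
      ¬ ∃ (x : Fin n → ℝ) (y : Fin h → ℝ) (δ : Fin h → ℝ) (δ' : Fin k → ℝ),
        (∀ r, A.mulVec x r ≤ d r) ∧
        (∀ j,
          (δ j = 0 ∨ δ j = 1) ∧
          y j ≥ 0 ∧
          y j ≥ W₁.mulVec x j + b₁ j ∧
          y j ≤ W₁.mulVec x j + b₁ j + M * δ j ∧
          y j ≤ M * (1 - δ j)) ∧
        (∀ j, δ' j = 0 ∨ δ' j = 1) ∧
        (∀ z : Fin c, z ≠ l →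
          W₂.mulVec y l + b₂ l ≤ W₂.mulVec y z + b₂ z +
            M * ∑ j : Fin k, (bitR (z : ℕ) j + (1 - 2 * bitR (z : ℕ) j) * δ' j)) ∧
        (1 ≤ ∑ j : Fin k, (bitR (l : ℕ) j + (1 - 2 * bitR (l : ℕ) j) * δ' j)) ∧
        (∀ z : ℕ, c ≤ z → z < 2 ^ k →
          1 ≤ ∑ j : Fin k, (bitR z j + (1 - 2 * bitR z j) * δ' j)) :=
  milp_local_robustness_general n h c p k hck W₁ b₁ W₂ b₂ A d l M f hf hM₁ hM₂
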